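/- arXiv:2509.10974 — 2 statements merged into one kernel-verified Lean document; each statement's English description precedes it below -/
import Mathlib

section
/- Let B, Γ ∈ ℝ^{N×M}, let Λ ∈ ℝ^{N×N} be symmetric positive definite, and set Σ_D := B Bᵀ + Λ and Σ := I_M − Bᵀ Σ_D⁻¹ B. Let Θ₀ ∈ ℝ^{M×M} be orthogonal, and define B̃ := B Θ₀, Γ̃ := Γ Θ₀, and Σ̃ := I_M − B̃ᵀ Σ_D⁻¹ B̃. Then Γ̃ Σ̃^{-1/2} B̃ᵀ Σ_D⁻¹ = Γ Σ^{-1/2} Bᵀ Σ_D⁻¹. -/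
open scoped Classical

/-- The (unique) symmetric positive semidefinite square root of a positive semidefinite
real matrix, extended by `0` to arbitrary matrices. -/
noncomputable def matSqrt {M : ℕ} (S : Matrix (Fin M) (Fin M) ℝ) : Matrix (Fin M) (Fin M) ℝ :=
  if h : S.PosSemidef then
    (h.1.eigenvectorUnitary : Matrix (Fin M) (Fin M) ℝ) *
      Matrix.diagonal ((↑) ∘ (√·) ∘ h.1.eigenvalues) *
      (star h.1.eigenvectorUnitary : Matrix (Fin M) (Fin M) ℝ)
  else 0

open scoped MatrixOrder in
lemma matSqrt_eq_cfcSqrt {M : ℕ} (S : Matrix (Fin M) (Fin M) ℝ) (h : S.PosSemidef) :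
    matSqrt S = CFC.sqrt S := by
  rw [matSqrt, dif_pos h, CFC.sqrt_eq_real_sqrt S h.nonneg,
    cfcₙ_eq_cfc (hf0 := by simp), h.1.cfc_eq, Matrix.IsHermitian.cfc]
  simp only [Unitary.conjStarAlgAut_apply]
  rfl

lemma real_conjTranspose_eq_transpose {m n : ℕ} (A : Matrix (Fin m) (Fin n) ℝ) :
    A.conjTranspose = A.transpose := by
  ext i j; simp [Matrix.conjTranspose]

open scoped MatrixOrder in
/-- **Invariance of the confounding-bias matrix under a common rotation (Step 1 of the proof
of Theorem 1).** Rotating both `B` and `Γ` by the same orthogonal matrix leaves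
`C = Γ Σ_{U|D}^{-1/2} Bᵀ Σ_D⁻¹` unchanged. -/
theorem bias_matrix_invariant_common_rotation
    {N M : ℕ}
    (B Γ : Matrix (Fin N) (Fin M) ℝ)
    (Λ : Matrix (Fin N) (Fin N) ℝ) (hΛ : Λ.PosDef)
    (SD : Matrix (Fin N) (Fin N) ℝ) (hSD : SD = B * B.transpose + Λ)
    (Sig : Matrix (Fin M) (Fin M) ℝ)
    (hSig : Sig = (1 : Matrix (Fin M) (Fin M) ℝ) - B.transpose * SD⁻¹ * B)
    (Θ₀ : Matrix (Fin M) (Fin M) ℝ) (hΘ₀ : Θ₀.transpose * Θ₀ = 1)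
    (Btil Γtil : Matrix (Fin N) (Fin M) ℝ)
    (hBtil : Btil = B * Θ₀) (hΓtil : Γtil = Γ * Θ₀)
    (Sigtil : Matrix (Fin M) (Fin M) ℝ)
    (hSigtil : Sigtil = (1 : Matrix (Fin M) (Fin M) ℝ) - Btil.transpose * SD⁻¹ * Btil) :
    Γtil * (matSqrt Sigtil)⁻¹ * Btil.transpose * SD⁻¹ =
      Γ * (matSqrt Sig)⁻¹ * B.transpose * SD⁻¹ := by
  have hΘ₀' : Θ₀ * Θ₀.transpose = 1 := mul_eq_one_comm.mp hΘ₀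
  have hTinv : Θ₀⁻¹ = Θ₀.transpose := Matrix.inv_eq_left_inv hΘ₀
  have hTtinv : (Θ₀.transpose)⁻¹ = Θ₀ := Matrix.inv_eq_right_inv hΘ₀
  have hcan1 : ∀ (K : ℕ) (X : Matrix (Fin M) (Fin K) ℝ), Θ₀ * (Θ₀.transpose * X) = X := by
    intro K X; rw [← Matrix.mul_assoc, hΘ₀', Matrix.one_mul]
  have hcan2 : ∀ (K : ℕ) (X : Matrix (Fin M) (Fin K) ℝ), Θ₀.transpose * (Θ₀ * X) = X := by
    intro K X; rw [← Matrix.mul_assoc, hΘ₀, Matrix.one_mul]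
  have hcan1' : ∀ (K : ℕ) (X : Matrix (Fin K) (Fin M) ℝ), X * Θ₀ * Θ₀.transpose = X := by
    intro K X; rw [Matrix.mul_assoc, hΘ₀', Matrix.mul_one]
  have hST : Sigtil = Θ₀.transpose * Sig * Θ₀ := by
    subst hBtil
    rw [hSigtil, hSig, Matrix.transpose_mul]
    rw [Matrix.mul_sub, Matrix.sub_mul, Matrix.mul_one, hΘ₀]
    congr 1
    simp only [Matrix.mul_assoc]
  by_cases h : Sig.PosSemidef
  · have hST' : Sigtil.PosSemidef := by
      rw [hST, ← real_conjTranspose_eq_transpose]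
      exact h.conjTranspose_mul_mul_same Θ₀
    have hsq : matSqrt Sigtil = Θ₀.transpose * matSqrt Sig * Θ₀ := by
      rw [matSqrt_eq_cfcSqrt _ hST', matSqrt_eq_cfcSqrt _ h]
      have hA : (Θ₀.transpose * CFC.sqrt Sig * Θ₀).PosSemidef := by
        rw [← real_conjTranspose_eq_transpose]
        exact (Matrix.nonneg_iff_posSemidef.mp (CFC.sqrt_nonneg Sig)).conjTranspose_mul_mul_same Θ₀
      have hsq2 : (Θ₀.transpose * CFC.sqrt Sig * Θ₀) ^ 2 = Sigtil := by
        rw [pow_two, hST]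
        calc Θ₀.transpose * CFC.sqrt Sig * Θ₀ * (Θ₀.transpose * CFC.sqrt Sig * Θ₀)
            = Θ₀.transpose * CFC.sqrt Sig * (Θ₀ * Θ₀.transpose) * CFC.sqrt Sig * Θ₀ := by
              noncomm_ring
          _ = Θ₀.transpose * (CFC.sqrt Sig * CFC.sqrt Sig) * Θ₀ := by
              rw [hΘ₀', Matrix.mul_one]; noncomm_ring
          _ = Θ₀.transpose * Sig * Θ₀ := by rw [CFC.sqrt_mul_sqrt_self Sig h.nonneg]
      exact CFC.sqrt_unique (by rw [← pow_two]; exact hsq2) hA.nonneg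
    rw [hsq, Matrix.mul_inv_rev, Matrix.mul_inv_rev, hTinv, hTtinv, hBtil, hΓtil,
      Matrix.transpose_mul]
    simp only [Matrix.mul_assoc, hcan1, hcan2]
  · have h' : ¬ Sigtil.PosSemidef := by
      intro hc
      apply h
      have : Sig = Θ₀ * Sigtil * Θ₀.transpose := by
        rw [hST]
        simp only [Matrix.mul_assoc, hcan1]
        rw [hΘ₀', Matrix.mul_one]
      rw [this]
      have := hc.conjTranspose_mul_mul_same Θ₀.transpose
      rwa [real_conjTranspose_eq_transpose, Matrix.transpose_transpose] at this
    rw [matSqrt, dif_neg h', matSqrt, dif_neg h, Matrix.inv_zero]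
    simp [Matrix.mul_zero, Matrix.zero_mul]
end

section
/- Let N, M ≥ 1. Let Γ ∈ ℝ^{N×M} with rows γ_1ᵀ,…,γ_Nᵀ, let R ∈ ℝ^{M×N} with columns r_1,…,r_N, and for each i ∈ {1,…,N} let 𝒩_i ⊆ {1,…,N}. Assume there exist M distinct indices i_1,…,i_M ∈ {1,…,N} such that (γ_{i_ℓ})_{ℓ=1}^M is a basis of ℝ^M and, for each ℓ, the set {r_j : j ∉ 𝒩_{i_ℓ}} spans ℝ^M. For each i let g_i, g'_i : ℝ^N → ℝ depend only on coordinates in 𝒩_i, and let Θ, Θ' ∈ ℝ^{M×M} (in particular, orthogonal matrices). If g_i(d) + γ_iᵀ Θ R d = g'_i(d) + γ_iᵀ Θ' R d for every i ∈ {1,…,N} and every d ∈ ℝ^N, then Θ = Θ' and g_i = g'_i for every i. -/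
/-!
Subtracting the two decompositions, `g i - g' i` is a function of the coordinates in `𝒩 i`
that equals the linear function `d ↦ γ_iᵀ (Θ - Θ') R d`. Evaluating at a basis vector `e_j`
with `j ∉ 𝒩 i` shows that the bilinear form `(w, v) ↦ wᵀ Θ v` and its analogue for `Θ'`
agree at `(γ_i, r_j)`. For a basis index `i = i_ℓ` these `r_j` span, so the forms agree on
`γ_{i_ℓ}` against everything; the `γ_{i_ℓ}` span too, so the forms and hence `Θ`, `Θ'`
coincide. With `Θ = Θ'` the remaining identity is `g i = g' i`.
-/

open Matrix

/-- A function `h : ℝ^N → ℝ` depends only on the coordinates in `𝒩` if its value is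
unchanged whenever the coordinates in `𝒩` are unchanged. -/
def DependsOnlyOn {N : ℕ} (h : (Fin N → ℝ) → ℝ) (𝒩 : Set (Fin N)) : Prop :=
  ∀ d d' : Fin N → ℝ, (∀ j ∈ 𝒩, d j = d' j) → h d = h d'

theorem DependsOnlyOn.sub_eq_of_add_eq {N : ℕ} {f f' φ φ' : (Fin N → ℝ) → ℝ} {S : Set (Fin N)}
    (hf : DependsOnlyOn f S) (hf' : DependsOnlyOn f' S) (h : ∀ d, f d + φ d = f' d + φ' d)
    {d : Fin N → ℝ} (hd : ∀ j ∈ S, d j = 0) : φ d - φ' d = φ 0 - φ' 0 := by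
  have hfd : f d = f 0 := hf d 0 hd
  have hf'd : f' d = f' 0 := hf' d 0 hd
  linarith [h d, h 0]

theorem Matrix.eq_of_dotProduct_mulVec_eq_on_spanning {R m n ι : Type*} [CommRing R]
    [Fintype m] [Fintype n] [DecidableEq m] [DecidableEq n] {A B : Matrix m n R}
    (w : ι → m → R) (hw : Submodule.span R (Set.range w) = ⊤)
    (t : ι → Set (n → R)) (ht : ∀ ℓ, Submodule.span R (t ℓ) = ⊤)
    (h : ∀ ℓ, ∀ v ∈ t ℓ, w ℓ ⬝ᵥ A *ᵥ v = w ℓ ⬝ᵥ B *ᵥ v) : A = B := by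
  have hrow : ∀ ℓ, toLinearMap₂' R A (w ℓ) = toLinearMap₂' R B (w ℓ) := fun ℓ =>
    LinearMap.ext_on (ht ℓ) fun v hv => by
      simpa only [toLinearMap₂'_apply'] using h ℓ v hv
  exact (toLinearMap₂' R).injective (LinearMap.ext_on_range hw hrow)

theorem factor_confounding_identification_general
    {N M : ℕ}
    (Γ : Matrix (Fin N) (Fin M) ℝ) (R : Matrix (Fin M) (Fin N) ℝ)
    (𝒩 : Fin N → Set (Fin N))
    (idx : Fin M → Fin N)
    (hbasis_span : Submodule.span ℝ (Set.range (fun ℓ => fun k => Γ (idx ℓ) k)) = ⊤)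
    (hrank : ∀ ℓ : Fin M,
      Submodule.span ℝ {v : Fin M → ℝ | ∃ j ∉ 𝒩 (idx ℓ), v = fun m => R m j} = ⊤)
    (g g' : Fin N → (Fin N → ℝ) → ℝ)
    (hg : ∀ i, DependsOnlyOn (g i) (𝒩 i)) (hg' : ∀ i, DependsOnlyOn (g' i) (𝒩 i))
    (Θ Θ' : Matrix (Fin M) (Fin M) ℝ)
    (heq : ∀ (i : Fin N) (d : Fin N → ℝ),
      g i d + (fun k => Γ i k) ⬝ᵥ Θ.mulVec (R.mulVec d) =
        g' i d + (fun k => Γ i k) ⬝ᵥ Θ'.mulVec (R.mulVec d)) :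
    Θ = Θ' ∧ ∀ i, g i = g' i := by
  have hΘ : Θ = Θ' := by
    refine eq_of_dotProduct_mulVec_eq_on_spanning _ hbasis_span _ hrank ?_
    rintro ℓ _ ⟨j, hj, rfl⟩
    have hoff : ∀ k ∈ 𝒩 (idx ℓ), (Pi.single j 1 : Fin N → ℝ) k = 0 := fun k hk =>
      Pi.single_eq_of_ne (show k ≠ j by rintro rfl; exact hj hk) 1
    have hcol := (hg (idx ℓ)).sub_eq_of_add_eq (hg' (idx ℓ)) (heq (idx ℓ)) hoff
    simp only [mulVec_single_one, mulVec_zero, dotProduct_zero, sub_self, sub_eq_zero] at hcol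
    exact hcol
  refine ⟨hΘ, fun i => funext fun d => ?_⟩
  subst hΘ
  exact add_right_cancel (heq i d)

/-- **Deterministic core of Theorem 1 (identification under factor confounding).**
Under the off-neighborhood rank condition (Assumption 7), the conditional-mean
decomposition `d ↦ g_i(d) + γ_iᵀ Θ R d` uniquely determines both the matrix `Θ` and the
causal effect functions `g_i`. -/
theorem factor_confounding_identification
    {N M : ℕ} (hN : 1 ≤ N) (hM : 1 ≤ M)
    (Γ : Matrix (Fin N) (Fin M) ℝ) (R : Matrix (Fin M) (Fin N) ℝ)
    (𝒩 : Fin N → Set (Fin N))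
    (idx : Fin M → Fin N) (hidx : Function.Injective idx)
    (hbasis_indep : LinearIndependent ℝ (fun ℓ => fun k => Γ (idx ℓ) k))
    (hbasis_span : Submodule.span ℝ (Set.range (fun ℓ => fun k => Γ (idx ℓ) k)) = ⊤)
    (hrank : ∀ ℓ : Fin M,
      Submodule.span ℝ {v : Fin M → ℝ | ∃ j ∉ 𝒩 (idx ℓ), v = fun m => R m j} = ⊤)
    (g g' : Fin N → (Fin N → ℝ) → ℝ)
    (hg : ∀ i, DependsOnlyOn (g i) (𝒩 i)) (hg' : ∀ i, DependsOnlyOn (g' i) (𝒩 i))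
    (Θ Θ' : Matrix (Fin M) (Fin M) ℝ)
    (heq : ∀ (i : Fin N) (d : Fin N → ℝ),
      g i d + (fun k => Γ i k) ⬝ᵥ Θ.mulVec (R.mulVec d) =
        g' i d + (fun k => Γ i k) ⬝ᵥ Θ'.mulVec (R.mulVec d)) :
    Θ = Θ' ∧ ∀ i, g i = g' i :=
  factor_confounding_identification_general Γ R 𝒩 idx hbasis_span hrank g g' hg hg' Θ Θ' heq
end
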